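/- arXiv:2112.01645 — 2 statements merged into one kernel-verified Lean document; each statement's English description precedes it below -/
import Mathlib

section
/- For the planar heat kernel $p_t$, for all $s,t>0$ and $a,b\in\mathbb{R}^2$: $\int_{\mathbb{R}^2}\Big(\frac{p_s(y,b)}{p_{s+t}(a,b)}-1\Big)^2 p_t(a,y)\,dy \;=\; \frac{s+t}{s}\cdot\frac{p_{s/2+t}(a,b)}{p_{(s+t)/2}(a,b)} \;-\;1$. -/
/-!
Write `P = p_{s+t}(a,b)`. Expanding the square turns the integral into
`P⁻² ∫ p_s(y,b)² p_t(a,y) dy - 2 P⁻¹ ∫ p_s(y,b) p_t(a,y) dy + ∫ p_t(a,y) dy`.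
Since `p_s² = (4πs)⁻¹ p_{s/2}`, Chapman–Kolmogorov evaluates the three integrals as
`(4πs)⁻¹ p_{s/2+t}(a,b)`, `P` and `1`, and `P² = (4π(s+t))⁻¹ p_{(s+t)/2}(a,b)` gives the claim.
Chapman–Kolmogorov itself follows by completing the square in `y`:
`p_u(y,b) p_t(a,y) = p_{u+t}(a,b) p_{ut/(u+t)}(m,y)` with `m = (t b + u a)/(u+t)`,
and each heat kernel has total mass `1` by the Gaussian integral.
-/

open Real MeasureTheory

noncomputable def heatKernel (t : ℝ) (x y : EuclideanSpace ℝ (Fin 2)) : ℝ :=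
  (2 * Real.pi * t)⁻¹ * Real.exp (-‖y - x‖ ^ 2 / (2 * t))

lemma norm_sub_sq_div_add_norm_sub_sq_div {E : Type*} [NormedAddCommGroup E]
    [InnerProductSpace ℝ E] {u t : ℝ} (hu : 0 < u) (ht : 0 < t) (a b y : E) :
    ‖y - b‖ ^ 2 / u + ‖y - a‖ ^ 2 / t =
      ‖b - a‖ ^ 2 / (u + t) + ‖y - (u + t)⁻¹ • (t • b + u • a)‖ ^ 2 / (u * t / (u + t)) := by
  have hut : u + t ≠ 0 := by positivity
  have hb : y - b = (y - (u + t)⁻¹ • (t • b + u • a)) - (u / (u + t)) • (b - a) := by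
    match_scalars <;> field_simp <;> ring
  have ha : y - a = (y - (u + t)⁻¹ • (t • b + u • a)) + (t / (u + t)) • (b - a) := by
    match_scalars <;> field_simp <;> ring
  rw [hb, ha]
  generalize y - (u + t)⁻¹ • (t • b + u • a) = w
  rw [norm_add_sq_real, norm_sub_sq_real, inner_smul_right, inner_smul_right, norm_smul,
    norm_smul, Real.norm_of_nonneg (by positivity), Real.norm_of_nonneg (by positivity)]
  field_simp
  ring

lemma heatKernel_pos {t : ℝ} (ht : 0 < t) (x y : EuclideanSpace ℝ (Fin 2)) :
    0 < heatKernel t x y := by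
  unfold heatKernel
  positivity

lemma heatKernel_sq {t : ℝ} (ht : 0 < t) (x y : EuclideanSpace ℝ (Fin 2)) :
    heatKernel t x y ^ 2 = (4 * π * t)⁻¹ * heatKernel (t / 2) x y := by
  simp only [heatKernel, mul_pow, sq (rexp _), ← Real.exp_add, ← mul_assoc]
  congr 1
  · field_simp
    ring
  · congr 1
    field_simp
    ring

lemma integral_heatKernel {t : ℝ} (ht : 0 < t) (x : EuclideanSpace ℝ (Fin 2)) :
    ∫ y, heatKernel t x y = 1 := by
  have hgauss : ∫ v : EuclideanSpace ℝ (Fin 2), rexp (-(2 * t)⁻¹ * ‖v‖ ^ 2) = 2 * π * t := by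
    rw [GaussianFourier.integral_rexp_neg_mul_sq_norm (by positivity), finrank_euclideanSpace,
      Fintype.card_fin, Nat.cast_ofNat, div_self two_ne_zero, Real.rpow_one]
    field_simp
  calc ∫ y, heatKernel t x y
      = ∫ y, (2 * π * t)⁻¹ * rexp (-(2 * t)⁻¹ * ‖y - x‖ ^ 2) := by
        congr with y
        rw [heatKernel]
        ring_nf
    _ = 1 := by
        rw [integral_sub_right_eq_self (fun v ↦ (2 * π * t)⁻¹ * rexp (-(2 * t)⁻¹ * ‖v‖ ^ 2)) x,
          integral_const_mul, hgauss]
        field_simp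

lemma integrable_heatKernel {t : ℝ} (ht : 0 < t) (x : EuclideanSpace ℝ (Fin 2)) :
    Integrable (heatKernel t x) :=
  Integrable.of_integral_ne_zero (by simp [integral_heatKernel ht x])

lemma heatKernel_mul_heatKernel {u t : ℝ} (hu : 0 < u) (ht : 0 < t)
    (a b y : EuclideanSpace ℝ (Fin 2)) :
    heatKernel u y b * heatKernel t a y =
      heatKernel (u + t) a b * heatKernel (u * t / (u + t)) ((u + t)⁻¹ • (t • b + u • a)) y := by
  have key := norm_sub_sq_div_add_norm_sub_sq_div hu ht a b y
  simp only [heatKernel, norm_sub_rev b y]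
  rw [mul_mul_mul_comm, ← Real.exp_add, mul_mul_mul_comm, ← Real.exp_add]
  congr 1
  · field_simp
  · have halve (c r : ℝ) : -c / (2 * r) = -(c / r) / 2 := by ring
    simp only [halve]
    congr 1
    linear_combination (-1 / 2 : ℝ) * key

lemma integral_heatKernel_mul_heatKernel {u t : ℝ} (hu : 0 < u) (ht : 0 < t)
    (a b : EuclideanSpace ℝ (Fin 2)) :
    ∫ y, heatKernel u y b * heatKernel t a y = heatKernel (u + t) a b := by
  simp only [heatKernel_mul_heatKernel hu ht, integral_const_mul,
    integral_heatKernel (by positivity : 0 < u * t / (u + t)), mul_one]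

lemma integrable_heatKernel_mul_heatKernel {u t : ℝ} (hu : 0 < u) (ht : 0 < t)
    (a b : EuclideanSpace ℝ (Fin 2)) :
    Integrable (fun y ↦ heatKernel u y b * heatKernel t a y) := by
  simp only [heatKernel_mul_heatKernel hu ht]
  exact (integrable_heatKernel (by positivity) _).const_mul _

theorem stmt9 (s t : ℝ) (hs : 0 < s) (ht : 0 < t) (a b : EuclideanSpace ℝ (Fin 2)) :
    ∫ y, (heatKernel s y b / heatKernel (s + t) a b - 1) ^ 2 * heatKernel t a y =
      (s + t) / s * (heatKernel (s / 2 + t) a b / heatKernel ((s + t) / 2) a b) - 1 := by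
  set P := heatKernel (s + t) a b
  have hP : 0 < P := heatKernel_pos (by positivity) a b
  have hP_sq : P ^ 2 = (4 * π * (s + t))⁻¹ * heatKernel ((s + t) / 2) a b :=
    heatKernel_sq (by positivity) a b
  have hexpand : (fun y ↦ (heatKernel s y b / P - 1) ^ 2 * heatKernel t a y) = fun y ↦
      ((P ^ 2)⁻¹ * (4 * π * s)⁻¹) * (heatKernel (s / 2) y b * heatKernel t a y)
        - 2 * P⁻¹ * (heatKernel s y b * heatKernel t a y) + heatKernel t a y := by
    ext y
    rw [mul_assoc (P ^ 2)⁻¹, ← mul_assoc (4 * π * s)⁻¹, ← heatKernel_sq hs]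
    field_simp
    ring
  have I₁ := (integrable_heatKernel_mul_heatKernel (half_pos hs) ht a b).const_mul
    ((P ^ 2)⁻¹ * (4 * π * s)⁻¹)
  have I₂ := (integrable_heatKernel_mul_heatKernel hs ht a b).const_mul (2 * P⁻¹)
  rw [hexpand, integral_add (I₁.sub' I₂) (integrable_heatKernel ht a), integral_sub I₁ I₂,
    integral_const_mul, integral_const_mul, integral_heatKernel_mul_heatKernel (half_pos hs) ht,
    integral_heatKernel_mul_heatKernel hs ht, integral_heatKernel ht, hP_sq]
  field_simp
  ring
end

section
/- Let $T,n,p$ be positive integers with $n/3 > T(p+1)$, let $a_1,\dots,a_T\in\mathbb{Z}$ and $b\in\mathbb{Z}$ with $|b|\le T$, and suppose $\sum_{i=1}^T a_i + b \ge n$. Then at least one of the following holds: (1) there exists $i$ with $a_i \ge n - T(p+1)$; (2) there exist $i\ne j$ with $|a_i|\ge n/3$ and $|a_j|\ge p$; (3) there exist pairwise distinct $i,j,k$ with $|a_i|\ge p$, $|a_j|\ge p$, $|a_k|\ge p$. -/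
theorem stmt17 (T n p : ℕ) (hT : 0 < T) (hn : 0 < n) (hp : 0 < p)
    (h : (T : ℝ) * (p + 1) < (n : ℝ) / 3)
    (a : Fin T → ℤ) (b : ℤ) (hb : |b| ≤ (T : ℤ))
    (hsum : (n : ℤ) ≤ (∑ i, a i) + b) :
    (∃ i, (n : ℤ) - T * (p + 1) ≤ a i) ∨
      (∃ i j, i ≠ j ∧ (n : ℝ) / 3 ≤ (|a i| : ℝ) ∧ (p : ℤ) ≤ |a j|) ∨
      (∃ i j k, i ≠ j ∧ j ≠ k ∧ i ≠ k ∧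
        (p : ℤ) ≤ |a i| ∧ (p : ℤ) ≤ |a j| ∧ (p : ℤ) ≤ |a k|) := by
  classical
  set S := Finset.univ.filter (fun i => (p : ℤ) ≤ |a i|) with hSdef
  have hT1 : (1 : ℤ) ≤ (T : ℤ) := by exact_mod_cast hT
  have hn3 : (n : ℝ) / 3 ≤ (n : ℝ) := by
    have : (0 : ℝ) ≤ (n : ℝ) := by positivity
    linarith
  have hTpZ : (T : ℤ) * ((p : ℤ) + 1) < (n : ℤ) := by
    have := h.trans_le hn3
    exact_mod_cast this
  have hmemS : ∀ i, i ∈ S ↔ (p : ℤ) ≤ |a i| := by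
    intro i; simp [hSdef]
  have hsmall : ∀ i, i ∉ S → a i ≤ (p : ℤ) - 1 := by
    intro i hi
    rw [hmemS] at hi
    have := le_abs_self (a i)
    omega
  have hcard : (Sᶜ.card : ℤ) ≤ (T : ℤ) := by
    have := Finset.card_le_univ Sᶜ
    simpa using (by exact_mod_cast this : (Sᶜ.card : ℤ) ≤ (Fintype.card (Fin T) : ℤ))
  have hcompl : ∑ i ∈ Sᶜ, a i ≤ (T : ℤ) * ((p : ℤ) - 1) := by
    calc ∑ i ∈ Sᶜ, a i ≤ ∑ _i ∈ Sᶜ, ((p : ℤ) - 1) :=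
          Finset.sum_le_sum fun i hi => hsmall i (Finset.mem_compl.mp hi)
      _ = (Sᶜ.card : ℤ) * ((p : ℤ) - 1) := by rw [Finset.sum_const, nsmul_eq_mul]
      _ ≤ (T : ℤ) * ((p : ℤ) - 1) := by
          have hp1 : (0 : ℤ) ≤ (p : ℤ) - 1 := by
            have : (1 : ℤ) ≤ (p : ℤ) := by exact_mod_cast hp
            omega
          exact mul_le_mul_of_nonneg_right hcard hp1
  have hbT : b ≤ (T : ℤ) := le_trans (le_abs_self b) hb
  have hSsum : (n : ℤ) - (T : ℤ) * (p : ℤ) ≤ ∑ i ∈ S, a i := by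
    have hsplit : ∑ i ∈ Sᶜ, a i + ∑ i ∈ S, a i = ∑ i, a i :=
      Finset.sum_compl_add_sum S a
    nlinarith [hsum, hcompl, hbT]
  rcases lt_or_ge 2 S.card with hc | hc
  · -- three big indices
    obtain ⟨i, j, k, hi, hj, hk, hij, hik, hjk⟩ := Finset.two_lt_card_iff.mp hc
    exact Or.inr (Or.inr ⟨i, j, k, hij, hjk, hik,
      (hmemS i).mp hi, (hmemS j).mp hj, (hmemS k).mp hk⟩)
  · interval_cases hcc : S.card
    · -- card 0 : contradiction
      have hS0 : S = ∅ := Finset.card_eq_zero.mp hcc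
      rw [hS0, Finset.sum_empty] at hSsum
      nlinarith [hTpZ, hT1]
    · -- card 1
      obtain ⟨i, hi⟩ := Finset.card_eq_one.mp hcc
      rw [hi, Finset.sum_singleton] at hSsum
      refine Or.inl ⟨i, ?_⟩
      nlinarith [hT1]
    · -- card 2
      obtain ⟨i, j, hij, hS2⟩ := Finset.card_eq_two.mp hcc
      have hiS : i ∈ S := by rw [hS2]; simp
      have hjS : j ∈ S := by rw [hS2]; simp
      rw [hS2, Finset.sum_pair hij] at hSsum
      have hpi := (hmemS i).mp hiS
      have hpj := (hmemS j).mp hjS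
      have key : ∀ x y : ℤ, (n : ℤ) - (T : ℤ) * (p : ℤ) ≤ x + y → y ≤ x →
          (n : ℝ) / 3 ≤ |(x : ℝ)| := by
        intro x y hxy hyx
        have h2x : (n : ℤ) - (T : ℤ) * (p : ℤ) ≤ 2 * x := by linarith
        have h2xR : (n : ℝ) - (T : ℝ) * (p : ℝ) ≤ 2 * (x : ℝ) := by exact_mod_cast h2x
        have hTnn : (0 : ℝ) ≤ (T : ℝ) := by positivity
        have hx3 : (n : ℝ) / 3 ≤ (x : ℝ) := by nlinarith
        exact hx3.trans (le_abs_self _)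
      rcases le_total (a j) (a i) with hle | hle
      · exact Or.inr (Or.inl ⟨i, j, hij, key (a i) (a j) (by linarith) hle, hpj⟩)
      · exact Or.inr (Or.inl ⟨j, i, hij.symm, key (a j) (a i) (by linarith) hle, hpi⟩)
end
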